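/- arXiv:2605.05033 — 2 statements merged into one kernel-verified Lean document; each statement's English description precedes it below -/
import Mathlib

section
/- Let c₁, c₂ > 0 and b > 2 satisfy c₁ < ((b-2)/2) c₂². Let ε > 0, α > 0, and let f : [0, ε] → ℝ be differentiable with f'(t) ≤ -((b-2)/2) f(t)² + c₁ ε^{-4α} for all t ∈ [0, ε], and f(0) < -c₂ ε^{-2α}. Then f(t) < -c₂ ε^{-2α} for all t ∈ [0, ε]. -/
theorem stmt_10 (b c₁ c₂ ε α : ℝ) (hb : 2 < b) (hc₁ : 0 < c₁) (hc₂ : 0 < c₂)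
    (hc : c₁ < (b-2)/2 * c₂^2) (hε : 0 < ε) (hα : 0 < α)
    (f f' : ℝ → ℝ)
    (hdiff : ∀ t ∈ Set.Icc (0:ℝ) ε, HasDerivAt f (f' t) t)
    (hineq : ∀ t ∈ Set.Icc (0:ℝ) ε, f' t ≤ -((b-2)/2) * (f t)^2 + c₁ * ε ^ (-(4*α)))
    (h0 : f 0 < -c₂ * ε ^ (-(2*α))) :
    ∀ t ∈ Set.Icc (0:ℝ) ε, f t < -c₂ * ε ^ (-(2*α)) := by
  set M : ℝ := -c₂ * ε ^ (-(2*α)) with hM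
  by_contra hcon
  push_neg at hcon
  obtain ⟨t₀, ht₀, hft₀⟩ := hcon
  have hcont : ContinuousOn f (Set.Icc 0 ε) := fun t ht =>
    (hdiff t ht).continuousAt.continuousWithinAt
  set S : Set ℝ := Set.Icc 0 ε ∩ f ⁻¹' Set.Ici M with hS
  have hSne : S.Nonempty := ⟨t₀, ht₀, hft₀⟩
  have hSclosed : IsClosed S :=
    hcont.preimage_isClosed_of_isClosed isClosed_Icc isClosed_Ici
  have hSbdd : BddBelow S := ⟨0, fun s hs => hs.1.1⟩
  set T := sInf S with hT
  have hTS : T ∈ S := hSclosed.csInf_mem hSne hSbdd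
  have hTIcc : T ∈ Set.Icc 0 ε := hTS.1
  have hfT : M ≤ f T := hTS.2
  have hT0 : 0 < T := by
    rcases lt_or_eq_of_le hTIcc.1 with h | h
    · exact h
    · exfalso; rw [← h] at hfT; linarith
  have hlt : ∀ t, 0 ≤ t → t < T → f t < M := by
    intro t h0t htT
    by_contra hge
    push_neg at hge
    have hmem : t ∈ S := ⟨⟨h0t, le_trans htT.le hTIcc.2⟩, hge⟩
    exact absurd (csInf_le hSbdd hmem) (not_le.mpr htT)
  have hIoo : Set.Ioo 0 T ∈ nhdsWithin T (Set.Iio T) := Ioo_mem_nhdsLT hT0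
  have hfTle : f T ≤ M := by
    have htend : Filter.Tendsto f (nhdsWithin T (Set.Iio T)) (nhds (f T)) :=
      ((hdiff T hTIcc).continuousAt.tendsto).mono_left nhdsWithin_le_nhds
    have hev : ∀ᶠ t in nhdsWithin T (Set.Iio T), f t ≤ M := by
      filter_upwards [hIoo] with t ht
      exact (hlt t ht.1.le ht.2).le
    exact le_of_tendsto htend hev
  have hfTM : f T = M := le_antisymm hfTle hfT
  have hεpow : 0 < ε ^ (-(4*α)) := Real.rpow_pos_of_pos hε _
  have hx : ε ^ (-(2*α)) * ε ^ (-(2*α)) = ε ^ (-(4*α)) := by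
    rw [← Real.rpow_add hε]; ring_nf
  have hM2 : M ^ 2 = c₂ ^ 2 * ε ^ (-(4*α)) := by
    calc M ^ 2 = c₂ ^ 2 * (ε ^ (-(2*α)) * ε ^ (-(2*α))) := by rw [hM]; ring
    _ = c₂ ^ 2 * ε ^ (-(4*α)) := by rw [hx]
  have hderiv : f' T < 0 := by
    have h1 := hineq T hTIcc
    rw [hfTM, hM2] at h1
    nlinarith
  have hslope : Filter.Tendsto (slope f T) (nhdsWithin T (Set.Iio T)) (nhds (f' T)) :=
    (hasDerivAt_iff_tendsto_slope.mp (hdiff T hTIcc)).mono_left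
      (nhdsWithin_mono T (fun x hx => ne_of_lt hx))
  have hev2 : ∀ᶠ t in nhdsWithin T (Set.Iio T), slope f T t < 0 :=
    hslope.eventually_lt_const hderiv
  have hboth := hev2.and (Filter.eventually_of_mem hIoo (fun t ht => ht))
  obtain ⟨t, hst, ht⟩ := hboth.exists
  have hden : t - T < 0 := by linarith [ht.2]
  have hslope_eq : slope f T t = (f t - f T) / (t - T) := by
    rw [slope_def_field]
  rw [hslope_eq] at hst
  have hnum : 0 < f t - f T := by
    rcases div_neg_iff.mp hst with ⟨h1, h2⟩ | ⟨h1, h2⟩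
    · linarith
    · linarith
  have := hlt t ht.1.le ht.2
  rw [hfTM] at hnum
  linarith
end

section
/- Suppose y : ℝ × [0,T) → ℝ is C¹, u : ℝ × [0,T) → ℝ is C¹, q(x,t) is the flow of u² (i.e., ∂_t q = u²(q,t), q(x,0)=x) with spatial derivative q_x > 0, and y satisfies y_t + u² y_x + b u u_x y = 0. Then for every x and t, y(q(x,t), t) · q_x(x,t)^{b/2} = y(x, 0). In particular, the sign of y(q(x,t),t) equals the sign of y(x,0). -/
open Set Real

private lemma exp_alg (a l hh eL e2 : ℝ) (hl : l ≠ 0) (he2 : e2 ≠ 0) (h : eL * eL = e2) :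
    a * l / e2 * (hh * eL) / l * eL = a * hh := by
  field_simp
  linear_combination a * hh * h

lemma flow_hasDerivAt (t₁ x : ℝ) (ht₁ : 0 ≤ t₁)
    (V Vx q : ℝ → ℝ → ℝ) (c : ℝ → ℝ)
    (hVx : Continuous fun p : ℝ × ℝ => Vx p.1 p.2)
    (hVd : ∀ z s, HasDerivAt (fun w => V w s) (Vx z s) z)
    (hq0 : ∀ z, q z 0 = z)
    (hq : ∀ z, ∀ s ∈ Set.Icc 0 t₁, HasDerivAt (fun τ => q z τ) (V (q z s) s) s)
    (hc : Continuous c) (hceq : ∀ s ∈ Set.Icc 0 t₁, c s = Vx (q x s) s) :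
    HasDerivAt (fun z => q z t₁) (Real.exp (∫ s in (0:ℝ)..t₁, c s)) x := by
  set E : ℝ → ℝ := fun s => Real.exp (∫ σ in (0:ℝ)..s, c σ) with hEdef
  have hI : ∀ s : ℝ, HasDerivAt (fun τ => ∫ σ in (0:ℝ)..τ, c σ) (c s) s := fun s =>
    intervalIntegral.integral_hasDerivAt_right (hc.intervalIntegrable _ _)
      (hc.stronglyMeasurableAtFilter _ _) hc.continuousAt
  have hE : ∀ s : ℝ, HasDerivAt E (c s * E s) s := by
    intro s
    simpa [hEdef, mul_comm] using (hI s).exp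
  have hE0 : E 0 = 1 := by simp [hEdef]
  -- the compact tube around the base trajectory
  set K : Set (ℝ × ℝ) := (fun p : ℝ × ℝ => (q x p.2 + p.1, p.2)) '' (Icc (-1:ℝ) 1 ×ˢ Icc 0 t₁)
    with hKdef
  have hQc : ∀ s ∈ Icc (0:ℝ) t₁, ContinuousAt (fun τ => q x τ) s := fun s hs =>
    (hq x s hs).continuousAt
  have hKcomp : IsCompact K := by
    apply (isCompact_Icc.prod isCompact_Icc).image_of_continuousOn
    apply ContinuousOn.prodMk
    · apply ContinuousOn.add
      · intro p hp
        exact ((hQc p.2 hp.2).comp continuousAt_snd).continuousWithinAt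
      · exact continuous_fst.continuousOn
    · exact continuous_snd.continuousOn
  have hmemK : ∀ w s, s ∈ Icc (0:ℝ) t₁ → |w - q x s| ≤ 1 → (w, s) ∈ K := by
    intro w s hs hw
    refine ⟨(w - q x s, s), ⟨abs_le.mp hw, hs⟩, ?_⟩
    simp
  obtain ⟨C, hC⟩ := hKcomp.exists_bound_of_continuousOn hVx.continuousOn
  set L : ℝ := max C 1 with hLdef
  have hL1 : (1:ℝ) ≤ L := le_max_right _ _
  have hLpos : (0:ℝ) < L := lt_of_lt_of_le one_pos hL1
  have hLbound : ∀ w s, (w, s) ∈ K → |Vx w s| ≤ L := by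
    intro w s hws
    calc |Vx w s| ≤ C := by simpa [Real.norm_eq_abs] using hC (w, s) hws
    _ ≤ L := le_max_left _ _
  -- Lipschitz bound on each slice
  have hVlip : ∀ s ∈ Icc (0:ℝ) t₁, ∀ w₁ w₂, |w₁ - q x s| ≤ 1 → |w₂ - q x s| ≤ 1 →
      |V w₁ s - V w₂ s| ≤ L * |w₁ - w₂| := by
    intro s hs w₁ w₂ h1 h2
    have hmem : ∀ w, |w - q x s| ≤ 1 → w ∈ Icc (q x s - 1) (q x s + 1) := by
      intro w hw
      rcases abs_le.mp hw with ⟨ha, hb⟩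
      constructor <;> linarith
    have := (convex_Icc (q x s - 1) (q x s + 1)).norm_image_sub_le_of_norm_hasDerivWithin_le
      (f := fun w => V w s) (f' := fun w => Vx w s)
      (fun w hw => (hVd w s).hasDerivWithinAt)
      (C := L)
      (fun w hw => by
        have hw1 : |w - q x s| ≤ 1 := by
          rcases hw with ⟨ha, hb⟩; rw [abs_le]; constructor <;> linarith
        simpa [Real.norm_eq_abs] using hLbound w s (hmemK w s hs hw1))
      (hmem w₂ h2) (hmem w₁ h1)
    simpa [Real.norm_eq_abs] using this
  -- main quantitative estimate
  have key : ∀ ε > (0:ℝ), ∃ h₀ > (0:ℝ), ∀ h : ℝ, |h| ≤ h₀ →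
      |q (x + h) t₁ - q x t₁ - h * E t₁| ≤ ε * |h| := by
    intro ε hε
    set ε₂ : ℝ := ε * L / Real.exp (2 * L * t₁) with hε₂def
    have hε₂ : 0 < ε₂ := by positivity
    have hUC := hKcomp.uniformContinuousOn_of_continuous hVx.continuousOn
    rw [Metric.uniformContinuousOn_iff] at hUC
    obtain ⟨δ, hδpos, hδ⟩ := hUC ε₂ hε₂
    set m : ℝ := min (δ / 2) 1 with hmdef
    have hmpos : 0 < m := lt_min (by linarith) one_pos
    have hm1 : m ≤ 1 := min_le_right _ _
    have hmδ : m ≤ δ / 2 := min_le_left _ _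
    refine ⟨m * Real.exp (-(L * t₁)) / 2, by positivity, ?_⟩
    intro h hh
    set Z : ℝ → ℝ := fun s => q (x + h) s - q x s with hZdef
    have hZd : ∀ s ∈ Icc (0:ℝ) t₁,
        HasDerivAt Z (V (q (x + h) s) s - V (q x s) s) s := fun s hs =>
      (hq (x + h) s hs).sub (hq x s hs)
    have hZ0 : Z 0 = h := by simp [hZdef, hq0]
    have hZcont : ContinuousOn Z (Icc 0 t₁) := fun s hs =>
      ((hZd s hs).continuousAt).continuousWithinAt
    have hexp1 : (1:ℝ) ≤ Real.exp (L * t₁) := Real.one_le_exp (by positivity)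
    have hhe : |h| * Real.exp (L * t₁) ≤ m / 2 := by
      have h1 : |h| ≤ m * Real.exp (-(L * t₁)) / 2 := hh
      have h2 : (0:ℝ) < Real.exp (L * t₁) := Real.exp_pos _
      calc |h| * Real.exp (L * t₁) ≤ m * Real.exp (-(L * t₁)) / 2 * Real.exp (L * t₁) :=
            mul_le_mul_of_nonneg_right h1 h2.le
        _ = m / 2 := by
            rw [Real.exp_neg]; field_simp
    have hhm : |h| ≤ m / 2 := by nlinarith [abs_nonneg h]
    -- the invariant set
    set B : Set ℝ := ⋂ σ : ℝ, {s : ℝ | |Z (min (max σ 0) (max (min s t₁) 0))| ≤ m} with hBdef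
    have hclamp_Icc : ∀ σ s : ℝ, min (max σ 0) (max (min s t₁) 0) ∈ Icc (0:ℝ) t₁ := by
      intro σ s
      constructor
      · exact le_min (le_max_right _ _) (le_max_right _ _)
      · exact le_trans (min_le_right _ _) (max_le (min_le_right _ _) ht₁)
    have hclamp_eq : ∀ σ s : ℝ, s ∈ Icc (0:ℝ) t₁ → 0 ≤ σ → σ ≤ s →
        min (max σ 0) (max (min s t₁) 0) = σ := by
      intro σ s hs hσ0 hσs
      rw [max_eq_left hσ0, min_eq_left hs.2, max_eq_left hs.1, min_eq_left hσs]
    have hBchar : ∀ s ∈ Icc (0:ℝ) t₁, (s ∈ B ↔ ∀ σ ∈ Icc (0:ℝ) s, |Z σ| ≤ m) := by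
      intro s hs
      constructor
      · intro hB σ hσ
        have h1 : |Z (min (max σ 0) (max (min s t₁) 0))| ≤ m := mem_iInter.mp hB σ
        rwa [hclamp_eq σ s hs hσ.1 hσ.2] at h1
      · intro hZB
        rw [mem_iInter]
        intro σ
        refine hZB _ ?_
        have h1 := hclamp_Icc σ s
        refine ⟨h1.1, ?_⟩
        rw [min_eq_left hs.2, max_eq_left hs.1]
        exact min_le_right _ _
    -- Gronwall on a partial interval, assuming the invariant
    have gron : ∀ t₂ ∈ Icc (0:ℝ) t₁, (∀ σ ∈ Icc (0:ℝ) t₂, |Z σ| ≤ m) →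
        ∀ s ∈ Icc (0:ℝ) t₂, |Z s| ≤ |h| * Real.exp (L * s) := by
      intro t₂ ht₂ hinv s hs
      have hsub : Icc (0:ℝ) t₂ ⊆ Icc 0 t₁ := Icc_subset_Icc le_rfl ht₂.2
      have hgr := norm_le_gronwallBound_of_norm_deriv_right_le (a := 0) (b := t₂)
        (f := Z) (f' := fun σ => V (q (x + h) σ) σ - V (q x σ) σ)
        (δ := |h|) (K := L) (ε := 0)
        (hZcont.mono hsub)
        (fun σ hσ => ((hZd σ (hsub (Ico_subset_Icc_self hσ))).hasDerivWithinAt))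
        (by simp [hZ0])
        (fun σ hσ => by
          have hσ' := hsub (Ico_subset_Icc_self hσ)
          have hZσ : |Z σ| ≤ m := hinv σ (Ico_subset_Icc_self hσ)
          have h1 : |q (x + h) σ - q x σ| ≤ 1 := le_trans hZσ hm1
          have h2 : |q x σ - q x σ| ≤ 1 := by simp
          have hl := hVlip σ hσ' (q (x + h) σ) (q x σ) h1 h2
          simpa [Real.norm_eq_abs, hZdef] using hl)
        s hs
      simpa [gronwallBound_ε0, Real.norm_eq_abs] using hgr
    -- continuous induction: the invariant holds on all of [0, t₁]
    have hBall : Icc (0:ℝ) t₁ ⊆ B := by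
      apply IsClosed.Icc_subset_of_forall_exists_gt
      · apply IsClosed.inter _ isClosed_Icc
        apply isClosed_iInter
        intro σ
        have hclc : Continuous fun s : ℝ => min (max σ 0) (max (min s t₁) 0) :=
          continuous_const.min ((continuous_id.min continuous_const).max continuous_const)
        have hcont : Continuous fun s : ℝ => Z (min (max σ 0) (max (min s t₁) 0)) := by
          rw [continuous_iff_continuousAt]
          intro s
          have : ContinuousAt (Z ∘ fun s : ℝ => min (max σ 0) (max (min s t₁) 0)) s :=
            ContinuousAt.comp ((hZd _ (hclamp_Icc σ s)).continuousAt) hclc.continuousAt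
          exact this
        exact isClosed_le hcont.abs continuous_const
      · rw [hBchar 0 (left_mem_Icc.mpr ht₁)]
        intro σ hσ
        have : σ = 0 := le_antisymm hσ.2 hσ.1
        rw [this, hZ0]
        linarith
      · rintro s₀ ⟨hs₀B, hs₀Ico⟩ yy hyy
        have hs₀Icc : s₀ ∈ Icc (0:ℝ) t₁ := Ico_subset_Icc_self hs₀Ico
        have hinv := (hBchar s₀ hs₀Icc).mp hs₀B
        have hZs₀ : |Z s₀| ≤ m / 2 := by
          have h1 := gron s₀ hs₀Icc hinv s₀ ⟨hs₀Ico.1, le_rfl⟩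
          calc |Z s₀| ≤ |h| * Real.exp (L * s₀) := h1
            _ ≤ |h| * Real.exp (L * t₁) := by
                apply mul_le_mul_of_nonneg_left _ (abs_nonneg h)
                exact Real.exp_le_exp.mpr (by nlinarith [hs₀Icc.2])
            _ ≤ m / 2 := hhe
        obtain ⟨η, hηpos, hη⟩ := Metric.continuousAt_iff.mp
          ((hZd s₀ hs₀Icc).continuousAt) (m / 2) (half_pos hmpos)
        set s₁ : ℝ := min (min (s₀ + η / 2) t₁) yy with hs₁def
        have hs₁gt : s₀ < s₁ := lt_min (lt_min (by linarith) hs₀Ico.2) hyy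
        have hs₁Icc : s₁ ∈ Icc (0:ℝ) t₁ := by
          constructor
          · linarith [hs₀Ico.1]
          · exact le_trans (min_le_left _ _) (min_le_right _ _)
        refine ⟨s₁, ?_, hs₁gt, min_le_right _ _⟩
        rw [hBchar s₁ hs₁Icc]
        intro σ hσ
        by_cases hcase : σ ≤ s₀
        · exact hinv σ ⟨hσ.1, hcase⟩
        · push_neg at hcase
          have hd : dist σ s₀ < η := by
            rw [Real.dist_eq, abs_of_pos (by linarith)]
            have : σ ≤ s₀ + η / 2 :=
              le_trans hσ.2 (le_trans (min_le_left _ _) (min_le_left _ _))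
            linarith
          have := hη hd
          rw [Real.dist_eq] at this
          calc |Z σ| ≤ |Z σ - Z s₀| + |Z s₀| := by
                have := abs_sub_abs_le_abs_sub (Z σ) (Z s₀); linarith [abs_abs (Z σ)]
            _ ≤ m / 2 + m / 2 := add_le_add this.le hZs₀
            _ = m := by ring
    have hinvAll : ∀ σ ∈ Icc (0:ℝ) t₁, |Z σ| ≤ m := fun σ hσ =>
      (hBchar σ hσ).mp (hBall hσ) σ ⟨hσ.1, le_rfl⟩
    have hZB : ∀ s ∈ Icc (0:ℝ) t₁, |Z s| ≤ |h| * Real.exp (L * s) :=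
      gron t₁ ⟨ht₁, le_rfl⟩ hinvAll
    -- second Gronwall: comparison with the linearization
    set R : ℝ → ℝ := fun s => Z s - h * E s with hRdef
    have hRd : ∀ s ∈ Icc (0:ℝ) t₁,
        HasDerivAt R ((V (q (x + h) s) s - V (q x s) s) - h * (c s * E s)) s := fun s hs =>
      (hZd s hs).sub ((hE s).const_mul h)
    have hR0 : R 0 = 0 := by simp [hRdef, hZ0, hE0]
    set εg : ℝ := ε₂ * (|h| * Real.exp (L * t₁)) with hεgdef
    have hεgnn : 0 ≤ εg := by positivity
    have hRbound : ∀ σ ∈ Ico (0:ℝ) t₁,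
        ‖(V (q (x + h) σ) σ - V (q x σ) σ) - h * (c σ * E σ)‖ ≤ L * ‖R σ‖ + εg := by
      intro σ hσ
      have hσ' : σ ∈ Icc (0:ℝ) t₁ := Ico_subset_Icc_self hσ
      have hcσ : c σ = Vx (q x σ) σ := hceq σ hσ'
      have hZσm : |Z σ| ≤ m := hinvAll σ hσ'
      -- decomposition
      have hdecomp : (V (q (x + h) σ) σ - V (q x σ) σ) - h * (c σ * E σ) =
          ((V (q (x + h) σ) σ - V (q x σ) σ) - Vx (q x σ) σ * Z σ) + Vx (q x σ) σ * R σ := by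
        rw [hcσ]; simp only [hRdef, hZdef]; ring
      -- Taylor remainder estimate by MVT on w ↦ V w σ - Vx (q x σ) σ * w
      have hrem : |(V (q (x + h) σ) σ - V (q x σ) σ) - Vx (q x σ) σ * Z σ| ≤ ε₂ * |Z σ| := by
        have hmem : ∀ w, |w - q x σ| ≤ m → w ∈ Icc (q x σ - m) (q x σ + m) := by
          intro w hw
          rcases abs_le.mp hw with ⟨ha, hb⟩
          constructor <;> linarith
        have hder : ∀ w ∈ Icc (q x σ - m) (q x σ + m),
            HasDerivWithinAt (fun w => V w σ - Vx (q x σ) σ * w)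
              (Vx w σ - Vx (q x σ) σ) (Icc (q x σ - m) (q x σ + m)) w := by
          intro w hw
          have h1 : HasDerivAt (fun w => Vx (q x σ) σ * w) (Vx (q x σ) σ) w := by
            simpa using (hasDerivAt_id w).const_mul (Vx (q x σ) σ)
          exact ((hVd w σ).sub h1).hasDerivWithinAt
        have hbnd : ∀ w ∈ Icc (q x σ - m) (q x σ + m),
            ‖Vx w σ - Vx (q x σ) σ‖ ≤ ε₂ := by
          intro w hw
          have hw1 : |w - q x σ| ≤ m := by
            rcases hw with ⟨ha, hb⟩; rw [abs_le]; constructor <;> linarith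
          have hwK : (w, σ) ∈ K := hmemK w σ hσ' (le_trans hw1 hm1)
          have hqK : (q x σ, σ) ∈ K := hmemK _ σ hσ' (by simp)
          have hdist : dist ((w, σ) : ℝ × ℝ) (q x σ, σ) < δ := by
            rw [Prod.dist_eq]
            simp only [Real.dist_eq, sub_self, abs_zero]
            rw [max_eq_left (abs_nonneg _)]
            calc |w - q x σ| ≤ m := hw1
              _ ≤ δ / 2 := hmδ
              _ < δ := by linarith
          have := hδ (w, σ) hwK (q x σ, σ) hqK hdist
          rw [Real.dist_eq] at this
          simpa [Real.norm_eq_abs] using this.le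
        have := (convex_Icc (q x σ - m) (q x σ + m)).norm_image_sub_le_of_norm_hasDerivWithin_le
          hder hbnd (hmem (q x σ) (by simpa using hmpos.le)) (hmem _ hZσm)
        have heq1 : (fun w => V w σ - Vx (q x σ) σ * w) (q (x + h) σ)
            - (fun w => V w σ - Vx (q x σ) σ * w) (q x σ)
            = (V (q (x + h) σ) σ - V (q x σ) σ) - Vx (q x σ) σ * Z σ := by
          simp only [hZdef]; ring
        have heq2 : q (x + h) σ - q x σ = Z σ := rfl
        rw [Real.norm_eq_abs, Real.norm_eq_abs, heq1, heq2] at this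
        exact this
      rw [hdecomp]
      have hVxL : |Vx (q x σ) σ| ≤ L := hLbound _ σ (hmemK _ σ hσ' (by simp))
      calc ‖((V (q (x + h) σ) σ - V (q x σ) σ) - Vx (q x σ) σ * Z σ) + Vx (q x σ) σ * R σ‖
          ≤ |(V (q (x + h) σ) σ - V (q x σ) σ) - Vx (q x σ) σ * Z σ| + |Vx (q x σ) σ * R σ| := by
            rw [Real.norm_eq_abs]; exact abs_add_le _ _
        _ ≤ ε₂ * |Z σ| + |Vx (q x σ) σ| * |R σ| := by
            rw [abs_mul]; exact add_le_add hrem le_rfl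
        _ ≤ ε₂ * (|h| * Real.exp (L * σ)) + L * |R σ| := by
            apply add_le_add
            · exact mul_le_mul_of_nonneg_left (hZB σ hσ') hε₂.le
            · exact mul_le_mul_of_nonneg_right hVxL (abs_nonneg _)
        _ ≤ εg + L * |R σ| := by
            refine add_le_add ?_ le_rfl
            rw [hεgdef]
            apply mul_le_mul_of_nonneg_left _ hε₂.le
            apply mul_le_mul_of_nonneg_left _ (abs_nonneg h)
            exact Real.exp_le_exp.mpr (by nlinarith [hσ'.2])
        _ = L * ‖R σ‖ + εg := by rw [Real.norm_eq_abs]; ring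
    have hRcont : ContinuousOn R (Icc 0 t₁) := fun s hs =>
      ((hRd s hs).continuousAt).continuousWithinAt
    have hRfinal : |R t₁| ≤ ε * |h| := by
      have hgr := norm_le_gronwallBound_of_norm_deriv_right_le (a := 0) (b := t₁)
        (f := R) (f' := fun σ => (V (q (x + h) σ) σ - V (q x σ) σ) - h * (c σ * E σ))
        (δ := 0) (K := L) (ε := εg)
        hRcont
        (fun σ hσ => (hRd σ (Ico_subset_Icc_self hσ)).hasDerivWithinAt)
        (by simp [hR0])
        hRbound
        t₁ ⟨ht₁, le_rfl⟩
      rw [gronwallBound_of_K_ne_0 hLpos.ne', Real.norm_eq_abs, sub_zero] at hgr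
      have hexp : Real.exp (L * t₁) * Real.exp (L * t₁) = Real.exp (2 * L * t₁) := by
        rw [← Real.exp_add]; ring_nf
      calc |R t₁| ≤ 0 * Real.exp (L * t₁) + εg / L * (Real.exp (L * t₁) - 1) := hgr
        _ ≤ εg / L * Real.exp (L * t₁) := by
            have h1 : 0 ≤ εg / L := div_nonneg hεgnn hLpos.le
            nlinarith [Real.exp_pos (L * t₁)]
        _ = ε * |h| := by
            rw [hεgdef, hε₂def]
            exact exp_alg ε L (|h|) (Real.exp (L * t₁)) (Real.exp (2 * L * t₁))
              hLpos.ne' (Real.exp_pos _).ne' hexp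
    simpa [hRdef, hZdef] using hRfinal
  -- conclude differentiability
  rw [hasDerivAt_iff_isLittleO, Asymptotics.isLittleO_iff]
  intro ε hε
  obtain ⟨h₀, hh₀, hkey⟩ := key ε hε
  filter_upwards [Metric.ball_mem_nhds x hh₀] with z hz
  have hzx : |z - x| ≤ h₀ := le_of_lt (by simpa [Real.dist_eq] using hz)
  have := hkey (z - x) hzx
  rw [add_sub_cancel] at this
  simpa [Real.norm_eq_abs, smul_eq_mul, mul_comm] using this


/-- Conservation of `y · q_x^{b/2}` along the flow of `u²` for the transport
equation `y_t + u² y_x + b u u_x y = 0`. -/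
theorem stmt_16 (T b : ℝ) (hT : 0 < T) (y u q qx : ℝ → ℝ → ℝ)
    (hyC1 : ContDiff ℝ 1 (fun p : ℝ × ℝ => y p.1 p.2))
    (huC1 : ContDiff ℝ 1 (fun p : ℝ × ℝ => u p.1 p.2))
    (hq0 : ∀ x, q x 0 = x)
    (hqt : ∀ x, ∀ t ∈ Set.Ico (0:ℝ) T, HasDerivAt (fun τ => q x τ) ((u (q x t) t)^2) t)
    (hqx : ∀ x, ∀ t ∈ Set.Ico (0:ℝ) T, HasDerivAt (fun z => q z t) (qx x t) x)
    (hqxpos : ∀ x, ∀ t ∈ Set.Ico (0:ℝ) T, 0 < qx x t)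
    (hPDE : ∀ x : ℝ, ∀ t ∈ Set.Ico (0:ℝ) T,
      deriv (fun τ => y x τ) t + (u x t)^2 * deriv (fun z => y z t) x
        + b * u x t * deriv (fun z => u z t) x * y x t = 0) :
    ∀ x : ℝ, ∀ t ∈ Set.Ico (0:ℝ) T,
      y (q x t) t * (qx x t) ^ (b/2) = y x 0 ∧
      Real.sign (y (q x t) t) = Real.sign (y x 0) := by
  intro x t₁ ht₁
  have ht₁T : t₁ < T := ht₁.2
  have ht₁0 : 0 ≤ t₁ := ht₁.1
  have hIccIco : Set.Icc (0:ℝ) t₁ ⊆ Set.Ico (0:ℝ) T := fun s hs =>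
    ⟨hs.1, lt_of_le_of_lt hs.2 ht₁T⟩
  -- partial derivatives
  have hUd : ∀ p : ℝ × ℝ, HasFDerivAt (fun p : ℝ × ℝ => u p.1 p.2)
      (fderiv ℝ (fun p : ℝ × ℝ => u p.1 p.2) p) p := fun p =>
    (huC1.differentiable one_ne_zero p).hasFDerivAt
  have hYd : ∀ p : ℝ × ℝ, HasFDerivAt (fun p : ℝ × ℝ => y p.1 p.2)
      (fderiv ℝ (fun p : ℝ × ℝ => y p.1 p.2) p) p := fun p =>
    (hyC1.differentiable one_ne_zero p).hasFDerivAt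
  set ux : ℝ → ℝ → ℝ := fun z s => fderiv ℝ (fun p : ℝ × ℝ => u p.1 p.2) (z, s) (1, 0)
    with huxdef
  set yx : ℝ → ℝ → ℝ := fun z s => fderiv ℝ (fun p : ℝ × ℝ => y p.1 p.2) (z, s) (1, 0)
    with hyxdef
  set yt : ℝ → ℝ → ℝ := fun z s => fderiv ℝ (fun p : ℝ × ℝ => y p.1 p.2) (z, s) (0, 1)
    with hytdef
  have hline : ∀ z s : ℝ, HasDerivAt (fun w : ℝ => ((w, s) : ℝ × ℝ)) (1, 0) z := fun z s =>
    (hasDerivAt_id z).prodMk (hasDerivAt_const z s)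
  have hline2 : ∀ z s : ℝ, HasDerivAt (fun τ : ℝ => ((z, τ) : ℝ × ℝ)) (0, 1) s := fun z s =>
    (hasDerivAt_const s z).prodMk (hasDerivAt_id s)
  have hux : ∀ z s, HasDerivAt (fun w => u w s) (ux z s) z := fun z s =>
    HasFDerivAt.comp_hasDerivAt (l := fun p : ℝ × ℝ => u p.1 p.2) z (hUd (z, s)) (hline z s)
  have hyx : ∀ z s, HasDerivAt (fun w => y w s) (yx z s) z := fun z s =>
    HasFDerivAt.comp_hasDerivAt (l := fun p : ℝ × ℝ => y p.1 p.2) z (hYd (z, s)) (hline z s)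
  have hyt : ∀ z s, HasDerivAt (fun τ => y z τ) (yt z s) s := fun z s =>
    (hYd (z, s)).comp_hasDerivAt s (hline2 z s)
  have hVd : ∀ z s : ℝ, HasDerivAt (fun w => (u w s)^2) (2 * u z s * ux z s) z := by
    intro z s
    simpa [pow_one] using (hux z s).fun_pow 2
  have hVxc : Continuous fun p : ℝ × ℝ => 2 * u p.1 p.2 * ux p.1 p.2 := by
    have h1 : Continuous fun p : ℝ × ℝ => fderiv ℝ (fun p : ℝ × ℝ => u p.1 p.2) p (1, 0) :=
      (huC1.continuous_fderiv one_ne_zero).clm_apply continuous_const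
    exact (continuous_const.mul huC1.continuous).mul h1
  -- the clamped coefficient
  set cl : ℝ → ℝ := fun s => min (max s 0) t₁ with hcldef
  have hclmem : ∀ s, cl s ∈ Set.Icc (0:ℝ) t₁ := fun s =>
    ⟨le_min (le_max_right _ _) ht₁0, min_le_right _ _⟩
  have hcleq : ∀ s ∈ Set.Icc (0:ℝ) t₁, cl s = s := fun s hs => by
    simp only [hcldef]; rw [max_eq_left hs.1, min_eq_left hs.2]
  have hclc : Continuous cl := (continuous_id.max continuous_const).min continuous_const
  set c : ℝ → ℝ := fun s => 2 * u (q x (cl s)) (cl s) * ux (q x (cl s)) (cl s) with hcdef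
  have hqcl : Continuous fun s => q x (cl s) := by
    rw [continuous_iff_continuousAt]
    intro s
    exact ((hqt x (cl s) (hIccIco (hclmem s))).continuousAt).comp hclc.continuousAt
  have hcc : Continuous c := by
    have : Continuous fun s => ((q x (cl s), cl s) : ℝ × ℝ) := hqcl.prodMk hclc
    exact hVxc.comp this
  have hceq : ∀ s ∈ Set.Icc (0:ℝ) t₁,
      c s = 2 * u (q x s) s * ux (q x s) s := fun s hs => by
    rw [hcdef]; simp only [hcleq s hs]
  -- spatial derivative of the flow
  have hflow : HasDerivAt (fun z => q z t₁) (Real.exp (∫ s in (0:ℝ)..t₁, c s)) x := by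
    apply flow_hasDerivAt t₁ x ht₁0 (fun z s => (u z s)^2)
      (fun z s => 2 * u z s * ux z s) q c hVxc hVd hq0
      (fun z s hs => hqt z s (hIccIco hs)) hcc hceq
  have hqxE : qx x t₁ = Real.exp (∫ s in (0:ℝ)..t₁, c s) := (hqx x t₁ ht₁).unique hflow
  set I : ℝ → ℝ := fun τ => ∫ σ in (0:ℝ)..τ, c σ with hIdef
  have hI : ∀ s : ℝ, HasDerivAt I (c s) s := fun s =>
    intervalIntegral.integral_hasDerivAt_right (hcc.intervalIntegrable _ _)
      (hcc.stronglyMeasurableAtFilter _ _) hcc.continuousAt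
  -- transport along the flow
  have hgd : ∀ s ∈ Set.Icc (0:ℝ) t₁, HasDerivAt (fun τ => y (q x τ) τ)
      (-(b * u (q x s) s * ux (q x s) s * y (q x s) s)) s := by
    intro s hs
    have hsI : s ∈ Set.Ico (0:ℝ) T := hIccIco hs
    have hγ : HasDerivAt (fun τ => ((q x τ, τ) : ℝ × ℝ)) ((u (q x s) s)^2, 1) s :=
      (hqt x s hsI).prodMk (hasDerivAt_id s)
    have hchain : HasDerivAt ((fun p : ℝ × ℝ => y p.1 p.2) ∘ fun τ => ((q x τ, τ) : ℝ × ℝ))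
        (fderiv ℝ (fun p : ℝ × ℝ => y p.1 p.2) (q x s, s) ((u (q x s) s)^2, 1)) s :=
      (hYd (q x s, s)).comp_hasDerivAt_of_eq s hγ rfl
    have hdecomp : fderiv ℝ (fun p : ℝ × ℝ => y p.1 p.2) (q x s, s) ((u (q x s) s)^2, 1)
        = (u (q x s) s)^2 * yx (q x s) s + yt (q x s) s := by
      have hv : (((u (q x s) s)^2, (1:ℝ)) : ℝ × ℝ)
          = (u (q x s) s)^2 • ((1:ℝ), (0:ℝ)) + (1:ℝ) • ((0:ℝ), (1:ℝ)) := by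
        simp [Prod.ext_iff]
      rw [hv, map_add, map_smul, map_smul, hyxdef, hytdef]
      simp [smul_eq_mul]
    have hpde := hPDE (q x s) s hsI
    rw [(hyt (q x s) s).deriv, (hyx (q x s) s).deriv, (hux (q x s) s).deriv] at hpde
    have heq : fderiv ℝ (fun p : ℝ × ℝ => y p.1 p.2) (q x s, s) ((u (q x s) s)^2, 1)
        = -(b * u (q x s) s * ux (q x s) s * y (q x s) s) := by
      rw [hdecomp]; linarith
    rw [heq] at hchain
    exact hchain
  -- the conserved quantity
  have hGd : ∀ s ∈ Set.Icc (0:ℝ) t₁,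
      HasDerivAt (fun τ => y (q x τ) τ * Real.exp (b / 2 * I τ)) 0 s := by
    intro s hs
    have h1 : HasDerivAt (fun τ => Real.exp (b / 2 * I τ))
        (Real.exp (b / 2 * I s) * (b / 2 * c s)) s := ((hI s).const_mul (b / 2)).exp
    have h2 : HasDerivAt (fun τ => y (q x τ) τ * Real.exp (b / 2 * I τ)) _ s := (hgd s hs).fun_mul h1
    convert h2 using 1
    rw [hceq s hs]
    ring
  have hGconst : y (q x t₁) t₁ * Real.exp (b / 2 * I t₁)
      = y (q x 0) 0 * Real.exp (b / 2 * I 0) := by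
    have hcont : ContinuousOn (fun τ => y (q x τ) τ * Real.exp (b / 2 * I τ))
        (Set.Icc 0 t₁) := fun s hs => ((hGd s hs).continuousAt).continuousWithinAt
    exact constant_of_has_deriv_right_zero hcont
      (fun s hsIco => (hGd s (Set.Ico_subset_Icc_self hsIco)).hasDerivWithinAt)
      t₁ (Set.right_mem_Icc.mpr ht₁0)
  have hI0 : I 0 = 0 := by simp [hIdef]
  have hG0 : y (q x 0) 0 * Real.exp (b / 2 * I 0) = y x 0 := by
    rw [hI0, hq0]; simp
  have hpos : (0:ℝ) < qx x t₁ := hqxpos x t₁ ht₁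
  have hrpow : qx x t₁ ^ (b/2) = Real.exp (b / 2 * I t₁) := by
    rw [hqxE, Real.rpow_def_of_pos (Real.exp_pos _), Real.log_exp]
    rw [mul_comm]
  have heq1 : y (q x t₁) t₁ * qx x t₁ ^ (b/2) = y x 0 := by
    rw [hrpow, hGconst]; exact hG0
  refine ⟨heq1, ?_⟩
  have hP : (0:ℝ) < qx x t₁ ^ (b/2) := Real.rpow_pos_of_pos hpos _
  rcases lt_trichotomy (y (q x t₁) t₁) 0 with hy | hy | hy
  · rw [Real.sign_of_neg hy, ← heq1, Real.sign_of_neg (mul_neg_of_neg_of_pos hy hP)]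
  · rw [← heq1, hy, zero_mul]
  · rw [Real.sign_of_pos hy, ← heq1, Real.sign_of_pos (mul_pos hy hP)]
end
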